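/- Let f : {0,1}^N → {0,1} be a nonconstant symmetric Boolean function (f(x) depends only on the Hamming weight |x|), and let t ≤ N/2 satisfy f_t ≠ f_{t+1}, where f_w denotes the value of f on inputs of weight w. Define the adversary matrix Γ by Γ[x,y] = 1 if |x| = t, |y| = t+1, and d(x,y) = 1 (or symmetrically with x,y swapped), and 0 otherwise. Then Γ is a nearest-neighbor adversary matrix for f and ‖Γ‖ / max_{i∈[N]} ‖Γ_i‖ = Ω(sqrt(N·t)) for t ≥ 1. -/

import Mathlib

open Finset

/-- The spectral norm (largest singular value) of a real matrix. -/
noncomputable def specNorm {m n : Type*} [Fintype m] [Fintype n] [DecidableEq n]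
    (M : Matrix m n ℝ) : ℝ :=
  ‖LinearMap.toContinuousLinearMap
      ((Matrix.toEuclideanLin : Matrix m n ℝ ≃ₗ[ℝ] _) M)‖

variable {N : ℕ}

/-- The Hamming weight of a Boolean string. -/
def wt (x : Fin N → Bool) : ℕ := (univ.filter fun i => x i = true).card

/-- `gammaS Γ S` zeroes out all entries `Γ[x,y]` where `x` and `y` agree on `S`. -/
def gammaS (Γ : Matrix (Fin N → Bool) (Fin N → Bool) ℝ) (S : Finset (Fin N)) :
    Matrix (Fin N → Bool) (Fin N → Bool) ℝ :=
  fun x y => if ∀ i ∈ S, x i = y i then 0 else Γ x y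

/-- The adversary matrix for a symmetric function at the sensitive weight level `t`:
weight `1` on pairs `(x,y)` at Hamming distance `1` with `{|x|,|y|} = {t, t+1}`. -/
def symGamma (t : ℕ) : Matrix (Fin N → Bool) (Fin N → Bool) ℝ :=
  fun x y =>
    if (wt x = t ∧ wt y = t + 1 ∨ wt x = t + 1 ∧ wt y = t) ∧ hammingDist x y = 1
    then 1 else 0

/-! ### Auxiliary combinatorial lemmas -/

lemma wt_update_true (x : Fin N → Bool) (i : Fin N) (h : x i = false) :
    wt (Function.update x i true) = wt x + 1 := by
  unfold wt
  have : (univ.filter fun j => Function.update x i true j = true)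
      = insert i (univ.filter fun j => x j = true) := by
    ext j
    by_cases hj : j = i
    · subst hj; simp [Function.update_self]
    · simp [Function.update_of_ne hj, hj]
  rw [this, card_insert_of_notMem (by simp [h])]

lemma wt_update_false (x : Fin N → Bool) (i : Fin N) (h : x i = true) :
    wt (Function.update x i false) + 1 = wt x := by
  unfold wt
  have : (univ.filter fun j => x j = true)
      = insert i (univ.filter fun j => Function.update x i false j = true) := by
    ext j
    by_cases hj : j = i
    · subst hj; simp [Function.update_self, h]
    · simp [Function.update_of_ne hj, hj]
  rw [this, card_insert_of_notMem (by simp [Function.update_self])]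

lemma hammingDist_update (x : Fin N → Bool) (i : Fin N) :
    hammingDist x (Function.update x i (!x i)) = 1 := by
  unfold hammingDist
  have : (univ.filter fun j => x j ≠ Function.update x i (!x i) j) = {i} := by
    ext j
    by_cases hj : j = i
    · subst hj; simp [Function.update_self]
    · simp [Function.update_of_ne hj, hj]
  rw [this, card_singleton]

lemma eq_update_of_hammingDist_one {x y : Fin N → Bool} (hd : hammingDist x y = 1)
    {i : Fin N} (hi : x i ≠ y i) : y = Function.update x i (!x i) := by
  unfold hammingDist at hd
  obtain ⟨a, ha⟩ := card_eq_one.mp hd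
  have hia : i = a := by
    have : i ∈ (univ.filter fun j => x j ≠ y j) := by simp [hi]
    rw [ha] at this; simpa using this
  subst hia
  funext j
  by_cases hj : j = i
  · subst hj
    rw [Function.update_self]
    revert hi; cases x j <;> cases y j <;> simp
  · have : j ∉ (univ.filter fun k => x k ≠ y k) := by rw [ha]; simp [hj]
    simp only [mem_filter, mem_univ, true_and, not_not] at this
    rw [Function.update_of_ne hj, ← this]

lemma card_false (x : Fin N → Bool) :
    (univ.filter fun i => x i = false).card = N - wt x := by
  have h1 := Finset.card_filter_add_card_filter_not (s := univ)
    (p := fun i : Fin N => x i = true)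
  simp only [card_univ, Fintype.card_fin] at h1
  have h2 : (univ.filter fun i : Fin N => ¬ x i = true) = univ.filter fun i => x i = false := by
    ext i; cases h : x i <;> simp [h]
  rw [h2] at h1
  unfold wt
  omega

lemma exists_ne_of_hammingDist_one {x y : Fin N → Bool} (hd : hammingDist x y = 1) :
    ∃ i, x i ≠ y i := by
  by_contra h
  push_neg at h
  have : x = y := funext h
  subst this
  simp [hammingDist] at hd

lemma card_up (x : Fin N → Bool) :
    (univ.filter fun y : Fin N → Bool => hammingDist x y = 1 ∧ wt y = wt x + 1).card
      = N - wt x := by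
  rw [← card_false x]
  symm
  apply card_bij (fun i _ => Function.update x i true)
  · intro i hi
    simp only [mem_filter, mem_univ, true_and] at hi ⊢
    have h1 : Function.update x i true = Function.update x i (!x i) := by rw [hi]; rfl
    constructor
    · rw [h1]; exact hammingDist_update x i
    · exact wt_update_true x i hi
  · intro a ha b hb hab
    simp only [mem_filter, mem_univ, true_and] at ha hb
    by_contra hne
    have := congrFun hab a
    rw [Function.update_self, Function.update_of_ne hne] at this
    rw [ha] at this; exact Bool.false_ne_true this.symm
  · intro y hy
    simp only [mem_filter, mem_univ, true_and] at hy
    obtain ⟨hd, hw⟩ := hy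
    obtain ⟨i, hi⟩ := exists_ne_of_hammingDist_one hd
    have hy' := eq_update_of_hammingDist_one hd hi
    have hxi : x i = false := by
      by_contra h
      have hxi : x i = true := by revert h; cases x i <;> simp
      rw [hy', hxi] at hw
      have := wt_update_false x i hxi
      simp only [hxi, Bool.not_true] at hw
      omega
    refine ⟨i, by simp [hxi], ?_⟩
    rw [hy', hxi]; rfl

lemma card_down (x : Fin N → Bool) :
    (univ.filter fun y : Fin N → Bool => hammingDist x y = 1 ∧ wt y + 1 = wt x).card
      = wt x := by
  symm
  apply card_bij (fun i _ => Function.update x i false)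
  · intro i hi
    simp only [mem_filter, mem_univ, true_and] at hi ⊢
    have h1 : Function.update x i false = Function.update x i (!x i) := by rw [hi]; rfl
    constructor
    · rw [h1]; exact hammingDist_update x i
    · exact wt_update_false x i hi
  · intro a ha b hb hab
    simp only [mem_filter, mem_univ, true_and] at ha hb
    by_contra hne
    have := congrFun hab a
    rw [Function.update_self, Function.update_of_ne hne] at this
    rw [ha] at this; exact Bool.false_ne_true this
  · intro y hy
    simp only [mem_filter, mem_univ, true_and] at hy
    obtain ⟨hd, hw⟩ := hy
    obtain ⟨i, hi⟩ := exists_ne_of_hammingDist_one hd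
    have hy' := eq_update_of_hammingDist_one hd hi
    have hxi : x i = true := by
      by_contra h
      have hxi : x i = false := by revert h; cases x i <;> simp
      rw [hxi] at hy'
      have h3 : wt y = wt x + 1 := by rw [hy']; exact wt_update_true x i hxi
      omega
    refine ⟨i, by simp [hxi], ?_⟩
    rw [hy', hxi]; rfl

/-! ### Auxiliary norm lemmas -/

lemma specNorm_nonneg {m n : Type*} [Fintype m] [Fintype n] [DecidableEq n]
    (M : Matrix m n ℝ) : 0 ≤ specNorm M := norm_nonneg _

lemma mulVec_norm_le {m n : Type*} [Fintype m] [Fintype n] [DecidableEq n]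
    (M : Matrix m n ℝ) (v : n → ℝ) :
    ‖(WithLp.equiv 2 (m → ℝ)).symm (M.mulVec v)‖ ≤
      specNorm M * ‖(WithLp.equiv 2 (n → ℝ)).symm v‖ := by
  have h := (LinearMap.toContinuousLinearMap
      ((Matrix.toEuclideanLin : Matrix m n ℝ ≃ₗ[ℝ] _) M)).le_opNorm
      ((WithLp.equiv 2 (n → ℝ)).symm v)
  exact h

lemma specNorm_le_of_bound {m n : Type*} [Fintype m] [Fintype n] [DecidableEq n]
    (M : Matrix m n ℝ) (C : ℝ) (hC : 0 ≤ C)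
    (h : ∀ v : n → ℝ, ‖(WithLp.equiv 2 (m → ℝ)).symm (M.mulVec v)‖ ≤
        C * ‖(WithLp.equiv 2 (n → ℝ)).symm v‖) :
    specNorm M ≤ C := by
  apply ContinuousLinearMap.opNorm_le_bound _ hC
  intro w
  have := h ((WithLp.equiv 2 (n → ℝ)) w)
  exact this

lemma entry_le_specNorm {m n : Type*} [Fintype m] [Fintype n] [DecidableEq n]
    (M : Matrix m n ℝ) (i : m) (j : n) : |M i j| ≤ specNorm M := by
  have h := mulVec_norm_le M (Pi.single j 1)
  rw [Matrix.mulVec_single, show (MulOpposite.op (1:ℝ) • M.col j) = fun i => M i j * 1 from by ext; simp] at h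
  have h2 : ‖(WithLp.equiv 2 (n → ℝ)).symm (Pi.single j (1:ℝ))‖ = 1 := by
    rw [show ((WithLp.equiv 2 (n → ℝ)).symm (Pi.single j (1:ℝ)))
        = EuclideanSpace.single j (1:ℝ) from rfl]
    simp
  rw [h2, mul_one] at h
  refine le_trans ?_ h
  have hn := EuclideanSpace.norm_eq ((WithLp.equiv 2 (m → ℝ)).symm (fun i => M i j * 1))
  rw [hn]
  have key : |M i j| = Real.sqrt (‖((WithLp.equiv 2 (m → ℝ)).symm (fun i => M i j * 1)) i‖^2) := by
    rw [Real.sqrt_sq_eq_abs]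
    simp
  rw [key]
  apply Real.sqrt_le_sqrt
  exact Finset.single_le_sum (f := fun x => ‖((WithLp.equiv 2 (m → ℝ)).symm (fun i => M i j * 1)) x‖^2) (fun x _ => by positivity) (mem_univ i)

lemma abs_apply_le_norm_symm {n : Type*} [Fintype n] (u : n → ℝ) (x : n) :
    |u x| ≤ ‖((WithLp.equiv 2 (n → ℝ)).symm u : EuclideanSpace ℝ n)‖ := by
  rw [EuclideanSpace.norm_eq]
  have key : |u x| = Real.sqrt (‖((WithLp.equiv 2 (n → ℝ)).symm u : EuclideanSpace ℝ n) x‖^2) := by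
    rw [Real.sqrt_sq_eq_abs]
    simp [Real.norm_eq_abs, abs_abs]
  rw [key]
  apply Real.sqrt_le_sqrt
  exact Finset.single_le_sum
    (f := fun i => ‖((WithLp.equiv 2 (n → ℝ)).symm u : EuclideanSpace ℝ n) i‖^2)
    (fun i _ => by positivity) (mem_univ x)

/-! ### The action of `symGamma` on weight-level indicator vectors -/

/-- indicator of weight-`w` strings -/
def ind (w : ℕ) : (Fin N → Bool) → ℝ := fun x => if wt x = w then 1 else 0

lemma mulVec_ind_succ (t : ℕ) :
    (symGamma t (N := N)).mulVec (ind (t+1)) = ((N - t : ℕ) : ℝ) • ind t := by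
  funext x
  unfold Matrix.mulVec dotProduct symGamma ind
  simp only [Pi.smul_apply, smul_eq_mul]
  have hterm : ∀ y : Fin N → Bool,
      (if (wt x = t ∧ wt y = t + 1 ∨ wt x = t + 1 ∧ wt y = t) ∧ hammingDist x y = 1
        then (1:ℝ) else 0) * (if wt y = t + 1 then 1 else 0)
      = if ((wt x = t ∧ wt y = t + 1 ∨ wt x = t + 1 ∧ wt y = t) ∧ hammingDist x y = 1)
          ∧ wt y = t + 1 then 1 else 0 := by
    intro y
    by_cases h1 : (wt x = t ∧ wt y = t + 1 ∨ wt x = t + 1 ∧ wt y = t) ∧ hammingDist x y = 1 <;>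
      by_cases h2 : wt y = t + 1 <;> simp [h1, h2]
  simp only [hterm]
  rw [Finset.sum_boole]
  by_cases hx : wt x = t
  · rw [if_pos hx, mul_one]
    have hcong : (univ.filter fun y : Fin N → Bool =>
        ((wt x = t ∧ wt y = t + 1 ∨ wt x = t + 1 ∧ wt y = t) ∧ hammingDist x y = 1)
          ∧ wt y = t + 1)
        = univ.filter fun y => hammingDist x y = 1 ∧ wt y = wt x + 1 := by
      apply filter_congr
      intro y _
      constructor
      · rintro ⟨⟨_, hd⟩, hw⟩; exact ⟨hd, by omega⟩
      · rintro ⟨hd, hw⟩; exact ⟨⟨Or.inl ⟨hx, by omega⟩, hd⟩, by omega⟩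
    rw [hcong, card_up, hx]
  · rw [if_neg hx, mul_zero]
    have : (univ.filter fun y : Fin N → Bool =>
        ((wt x = t ∧ wt y = t + 1 ∨ wt x = t + 1 ∧ wt y = t) ∧ hammingDist x y = 1)
          ∧ wt y = t + 1) = ∅ := by
      apply filter_false_of_mem
      rintro y _ ⟨⟨h | h, _⟩, hw⟩
      · exact hx h.1
      · omega
    rw [this, card_empty]
    simp

lemma mulVec_ind_self (t : ℕ) :
    (symGamma t (N := N)).mulVec (ind t) = ((t + 1 : ℕ) : ℝ) • ind (t+1) := by
  funext x
  unfold Matrix.mulVec dotProduct symGamma ind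
  simp only [Pi.smul_apply, smul_eq_mul]
  have hterm : ∀ y : Fin N → Bool,
      (if (wt x = t ∧ wt y = t + 1 ∨ wt x = t + 1 ∧ wt y = t) ∧ hammingDist x y = 1
        then (1:ℝ) else 0) * (if wt y = t then 1 else 0)
      = if ((wt x = t ∧ wt y = t + 1 ∨ wt x = t + 1 ∧ wt y = t) ∧ hammingDist x y = 1)
          ∧ wt y = t then 1 else 0 := by
    intro y
    by_cases h1 : (wt x = t ∧ wt y = t + 1 ∨ wt x = t + 1 ∧ wt y = t) ∧ hammingDist x y = 1 <;>
      by_cases h2 : wt y = t <;> simp [h1, h2]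
  simp only [hterm]
  rw [Finset.sum_boole]
  by_cases hx : wt x = t + 1
  · rw [if_pos hx, mul_one]
    have hcong : (univ.filter fun y : Fin N → Bool =>
        ((wt x = t ∧ wt y = t + 1 ∨ wt x = t + 1 ∧ wt y = t) ∧ hammingDist x y = 1)
          ∧ wt y = t)
        = univ.filter fun y => hammingDist x y = 1 ∧ wt y + 1 = wt x := by
      apply filter_congr
      intro y _
      constructor
      · rintro ⟨⟨_, hd⟩, hw⟩; exact ⟨hd, by omega⟩
      · rintro ⟨hd, hw⟩; exact ⟨⟨Or.inr ⟨hx, by omega⟩, hd⟩, by omega⟩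
    rw [hcong, card_down, hx]
  · rw [if_neg hx, mul_zero]
    have : (univ.filter fun y : Fin N → Bool =>
        ((wt x = t ∧ wt y = t + 1 ∨ wt x = t + 1 ∧ wt y = t) ∧ hammingDist x y = 1)
          ∧ wt y = t) = ∅ := by
      apply filter_false_of_mem
      rintro y _ ⟨⟨h | h, _⟩, hw⟩
      · omega
      · exact hx h.1
    rw [this, card_empty]
    simp

/-! ### Bounding `‖Γᵢ‖` -/

def flipEquiv (i : Fin N) : Equiv.Perm (Fin N → Bool) :=
  Function.Involutive.toPerm (fun x => Function.update x i (!x i)) (by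
    intro x
    simp only [Function.update_idem, Function.update_self, Bool.not_not,
      Function.update_eq_self])

lemma gammaS_mulVec (t : ℕ) (i : Fin N) (v : (Fin N → Bool) → ℝ) (x : Fin N → Bool) :
    (gammaS (symGamma t) {i}).mulVec v x
      = gammaS (symGamma t) {i} x (flipEquiv i x) * v (flipEquiv i x) := by
  unfold Matrix.mulVec dotProduct
  apply Finset.sum_eq_single
  · intro y _ hy
    have hz : gammaS (symGamma t) {i} x y = 0 := by
      unfold gammaS
      split
      · rfl
      · rename_i h
        push_neg at h
        obtain ⟨j, hj, hne⟩ := h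
        simp only [mem_singleton] at hj
        subst hj
        unfold symGamma
        split
        · rename_i hc
          exact absurd (eq_update_of_hammingDist_one hc.2 hne) hy
        · rfl
    show gammaS (symGamma t) {i} x y * v y = 0
    rw [hz, zero_mul]
  · intro h
    exact absurd (mem_univ _) h

lemma abs_gammaS_le_one (t : ℕ) (i : Fin N) (x y : Fin N → Bool) :
    |gammaS (symGamma t (N := N)) {i} x y| ≤ 1 := by
  unfold gammaS symGamma
  split
  · simp
  · split <;> simp

lemma specNorm_gammaS_le (t : ℕ) (i : Fin N) :
    specNorm (gammaS (symGamma t (N := N)) {i}) ≤ 1 := by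
  apply specNorm_le_of_bound _ 1 zero_le_one
  intro v
  rw [one_mul, EuclideanSpace.norm_eq, EuclideanSpace.norm_eq]
  apply Real.sqrt_le_sqrt
  have hre : ∑ x : Fin N → Bool, ‖((WithLp.equiv 2 _).symm v : EuclideanSpace ℝ (Fin N → Bool)) x‖^2
      = ∑ x : Fin N → Bool, ‖v (flipEquiv i x)‖^2 := by
    exact (Equiv.sum_comp (flipEquiv i) fun x => ‖v x‖^2).symm
  rw [hre]
  apply Finset.sum_le_sum
  intro x _
  have h1 : ((WithLp.equiv 2 _).symm ((gammaS (symGamma t) {i}).mulVec v)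
      : EuclideanSpace ℝ (Fin N → Bool)) x
      = gammaS (symGamma t) {i} x (flipEquiv i x) * v (flipEquiv i x) :=
    gammaS_mulVec t i v x
  rw [h1]
  have h2 := abs_gammaS_le_one t i x (flipEquiv i x)
  rw [Real.norm_eq_abs, Real.norm_eq_abs, abs_mul, mul_pow]
  have h3 : |gammaS (symGamma t (N := N)) {i} x (flipEquiv i x)|^2 ≤ 1 := by
    nlinarith [abs_nonneg (gammaS (symGamma t (N := N)) {i} x (flipEquiv i x))]
  nlinarith [sq_nonneg (v (flipEquiv i x)), sq_abs (v (flipEquiv i x))]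

lemma wt_indicator (w : ℕ) (h : w ≤ N) :
    wt (fun j : Fin N => decide ((j : ℕ) < w)) = w := by
  unfold wt
  have : (univ.filter fun j : Fin N => (decide ((j:ℕ) < w)) = true)
      = (Finset.range w).attachFin (fun m hm => lt_of_lt_of_le (mem_range.mp hm) h) := by
    ext j
    simp [Finset.mem_attachFin]
  rw [this, Finset.card_attachFin, card_range]

/-- For a nonconstant symmetric Boolean function `f` (its value
depends only on the Hamming weight) with `f_t ≠ f_{t+1}`, `1 ≤ t ≤ N/2`, the matrix
`Γ = symGamma t` is a nearest-neighbor adversary matrix for `f` and satisfies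
`‖Γ‖ / maxᵢ ‖Γᵢ‖ = Ω(√(N·t))` (explicitly, it is at least `√(N·t/2)`). -/
theorem symmetric_nn_adversary (f : (Fin N → Bool) → Bool) (t : ℕ)
    (ht : 1 ≤ t) (htN : 2 * t ≤ N)
    (hsymm : ∀ x y, wt x = wt y → f x = f y)
    (hsens : ∀ x y : Fin N → Bool, wt x = t → wt y = t + 1 → f x ≠ f y) :
    (∀ x y : Fin N → Bool, symGamma t x y = symGamma t y x) ∧
    (∀ x y : Fin N → Bool, f x = f y → symGamma t x y = 0) ∧
    (∀ x y : Fin N → Bool, 1 < hammingDist x y → symGamma t x y = 0) ∧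
    Real.sqrt ((N * t : ℕ) / 2) ≤
      specNorm (symGamma t (N := N)) /
        ⨆ i : Fin N, specNorm (gammaS (symGamma t (N := N)) {i}) := by
  have htN' : t ≤ N := by omega
  have ht1N : t + 1 ≤ N := by omega
  have hN : 0 < N := by omega
  refine ⟨?_, ?_, ?_, ?_⟩
  · -- symmetry
    intro x y
    unfold symGamma
    apply if_congr _ rfl rfl
    constructor
    · rintro ⟨h, hd⟩; exact ⟨by tauto, by rwa [hammingDist_comm]⟩
    · rintro ⟨h, hd⟩; exact ⟨by tauto, by rwa [hammingDist_comm]⟩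
  · -- zero on equal values
    intro x y hf
    unfold symGamma
    rw [if_neg]
    rintro ⟨h | h, _⟩
    · exact hsens x y h.1 h.2 hf
    · exact hsens y x h.2 h.1 hf.symm
  · -- zero beyond distance one
    intro x y hd
    unfold symGamma
    rw [if_neg]
    rintro ⟨_, h1⟩
    omega
  · -- the spectral bound
    -- Step 1: the denominator equals 1
    have hDle : (⨆ i : Fin N, specNorm (gammaS (symGamma t (N := N)) {i})) ≤ 1 :=
      Real.iSup_le (fun i => specNorm_gammaS_le t i) zero_le_one
    set i0 : Fin N := ⟨0, hN⟩ with hi0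
    set y0 : Fin N → Bool := fun j => decide ((j : ℕ) < t + 1) with hy0
    have hwy : wt y0 = t + 1 := wt_indicator _ ht1N
    have hy0i : y0 i0 = true := by simp [hy0, hi0]
    set x0 : Fin N → Bool := Function.update y0 i0 false with hx0
    have hx0i : x0 i0 = false := by rw [hx0, Function.update_self]
    have hwx : wt x0 + 1 = wt y0 := wt_update_false y0 i0 hy0i
    have hnotx : (!x0 i0) = true := by rw [hx0i]; rfl
    have hyx : y0 = Function.update x0 i0 (!x0 i0) := by
      rw [hnotx, hx0, Function.update_idem]
      conv_lhs => rw [← Function.update_eq_self i0 y0]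
      rw [hy0i]
    have hd : hammingDist x0 y0 = 1 := by rw [hyx]; exact hammingDist_update x0 i0
    have hentry : gammaS (symGamma t) {i0} x0 y0 = 1 := by
      unfold gammaS symGamma
      rw [if_neg, if_pos]
      · exact ⟨Or.inl ⟨by omega, hwy⟩, hd⟩
      · intro h
        have := h i0 (mem_singleton_self i0)
        rw [hx0i, hy0i] at this
        exact Bool.false_ne_true this
    have h1le : (1 : ℝ) ≤ specNorm (gammaS (symGamma t (N := N)) {i0}) := by
      have h := entry_le_specNorm (gammaS (symGamma t (N := N)) {i0}) x0 y0
      rw [hentry] at h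
      simpa using h
    have hDge : (1 : ℝ) ≤ ⨆ i : Fin N, specNorm (gammaS (symGamma t (N := N)) {i}) :=
      le_trans h1le (le_ciSup (f := fun i : Fin N => specNorm (gammaS (symGamma t (N := N)) {i}))
        (Set.Finite.bddAbove (Set.finite_range _)) i0)
    have hD : (⨆ i : Fin N, specNorm (gammaS (symGamma t (N := N)) {i})) = 1 :=
      le_antisymm hDle hDge
    rw [hD, div_one]
    -- Step 2: the numerator is at least √(Nt/2)
    set S := specNorm (symGamma t (N := N)) with hS
    have hSnn : 0 ≤ S := specNorm_nonneg _
    set U := ‖((WithLp.equiv 2 ((Fin N → Bool) → ℝ)).symm (ind t (N := N))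
      : EuclideanSpace ℝ (Fin N → Bool))‖ with hU
    set V := ‖((WithLp.equiv 2 ((Fin N → Bool) → ℝ)).symm (ind (t+1) (N := N))
      : EuclideanSpace ℝ (Fin N → Bool))‖ with hV
    have hUpos : 0 < U := by
      have h := abs_apply_le_norm_symm (ind t (N := N)) (fun j : Fin N => decide ((j : ℕ) < t))
      rw [show ind t (N := N) (fun j : Fin N => decide ((j : ℕ) < t)) = 1 from by
        unfold ind; rw [if_pos (wt_indicator t htN')]] at h
      rw [abs_one] at h
      linarith
    have hVpos : 0 < V := by
      have h := abs_apply_le_norm_symm (ind (t+1) (N := N))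
        (fun j : Fin N => decide ((j : ℕ) < t + 1))
      rw [show ind (t+1) (N := N) (fun j : Fin N => decide ((j : ℕ) < t + 1)) = 1 from by
        unfold ind; rw [if_pos (wt_indicator (t+1) ht1N)]] at h
      rw [abs_one] at h
      linarith
    have h1 : ((N - t : ℕ) : ℝ) * U ≤ S * V := by
      have h := mulVec_norm_le (symGamma t (N := N)) (ind (t+1))
      rw [mulVec_ind_succ] at h
      rw [show ((WithLp.equiv 2 ((Fin N → Bool) → ℝ)).symm (((N - t : ℕ) : ℝ) • ind t (N := N))
          : EuclideanSpace ℝ (Fin N → Bool))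
          = ((N - t : ℕ) : ℝ) • ((WithLp.equiv 2 ((Fin N → Bool) → ℝ)).symm (ind t (N := N))
          : EuclideanSpace ℝ (Fin N → Bool)) from rfl, norm_smul, Real.norm_eq_abs,
        abs_of_nonneg (by positivity : (0:ℝ) ≤ ((N - t : ℕ) : ℝ))] at h
      exact h
    have h2 : ((t + 1 : ℕ) : ℝ) * V ≤ S * U := by
      have h := mulVec_norm_le (symGamma t (N := N)) (ind t)
      rw [mulVec_ind_self] at h
      rw [show ((WithLp.equiv 2 ((Fin N → Bool) → ℝ)).symm (((t + 1 : ℕ) : ℝ) • ind (t+1) (N := N))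
          : EuclideanSpace ℝ (Fin N → Bool))
          = ((t + 1 : ℕ) : ℝ) • ((WithLp.equiv 2 ((Fin N → Bool) → ℝ)).symm (ind (t+1) (N := N))
          : EuclideanSpace ℝ (Fin N → Bool)) from rfl, norm_smul, Real.norm_eq_abs,
        abs_of_nonneg (by positivity : (0:ℝ) ≤ ((t + 1 : ℕ) : ℝ))] at h
      exact h
    have hprod : ((N - t : ℕ) : ℝ) * ((t + 1 : ℕ) : ℝ) ≤ S ^ 2 := by
      have hmul := mul_le_mul h1 h2
        (mul_nonneg (Nat.cast_nonneg _) (le_of_lt hVpos))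
        (mul_nonneg hSnn (le_of_lt hVpos))
      nlinarith [mul_pos hUpos hVpos]
    have hcast : ((N - t : ℕ) : ℝ) = (N : ℝ) - (t : ℝ) := by
      rw [Nat.cast_sub htN']
    have htR : 2 * (t : ℝ) ≤ (N : ℝ) := by exact_mod_cast htN
    have htR1 : 1 ≤ (t : ℝ) := by exact_mod_cast ht
    have hhalf : ((N * t : ℕ) : ℝ) / 2 ≤ S ^ 2 := by
      rw [hcast] at hprod
      push_cast at hprod ⊢
      nlinarith [mul_le_mul_of_nonneg_right htR (le_trans zero_le_one htR1)]
    calc Real.sqrt (((N * t : ℕ) : ℝ) / 2) ≤ Real.sqrt (S ^ 2) := Real.sqrt_le_sqrt hhalf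
      _ = S := by rw [Real.sqrt_sq hSnn]
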